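/- Under the hypotheses of the Klebanov identity, the characteristic functions of X₁ and X₂ have nearly equal moduli: | |f₁(2t)| − |f₂(2t)| | ≤ 2ε for all ‖t‖₁ ≤ T. -/

import Mathlib

open MeasureTheory ProbabilityTheory

/-- The characteristic function `f_X(t) = E[exp(i tᵀ X)]`. -/
noncomputable def charFun' {Ω : Type*} [MeasurableSpace Ω] (μ : Measure Ω) {d : ℕ}
    (X : Ω → EuclideanSpace ℝ (Fin d)) (t : EuclideanSpace ℝ (Fin d)) : ℂ :=
  ∫ ω, Complex.exp (Complex.I * ((inner ℝ t (X ω) : ℝ) : ℂ)) ∂μ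

/-- The joint characteristic function `f_{U,V}(t₁,t₂) = E[exp(i t₁ᵀU + i t₂ᵀV)]`. -/
noncomputable def jointCharFun' {Ω : Type*} [MeasurableSpace Ω] (μ : Measure Ω) {d : ℕ}
    (U V : Ω → EuclideanSpace ℝ (Fin d))
    (t₁ t₂ : EuclideanSpace ℝ (Fin d)) : ℂ :=
  ∫ ω, Complex.exp (Complex.I * ((inner ℝ t₁ (U ω) + inner ℝ t₂ (V ω) : ℝ) : ℂ)) ∂μ

/-! The identity `⟨s, X + Y⟩ + ⟨u, X − Y⟩ = ⟨s + u, X⟩ + ⟨s − u, Y⟩` turns the joint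
characteristic function of `(X₁ + X₂, X₁ − X₂)` at `(t, t)` and `(t, −t)` into `f₁(2t)` and
`f₂(2t)`. By (ε,T)-dependence these are within `ε` of `f₊(t) f₋(t)` and `f₊(t) f₋(−t)`, and
since `f₋(−t) = conj f₋(t)` the two products have the same modulus. -/

section CharFun

variable {Ω : Type*} [MeasurableSpace Ω] (μ : Measure Ω) {d : ℕ}

lemma charFun'_neg (X : Ω → EuclideanSpace ℝ (Fin d)) (t : EuclideanSpace ℝ (Fin d)) :
    charFun' μ X (-t) = starRingEnd ℂ (charFun' μ X t) := by
  unfold charFun'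
  rw [← integral_conj]
  congr 1 with ω
  rw [← Complex.exp_conj]
  simp [inner_neg_left]

lemma norm_charFun'_neg (X : Ω → EuclideanSpace ℝ (Fin d)) (t : EuclideanSpace ℝ (Fin d)) :
    ‖charFun' μ X (-t)‖ = ‖charFun' μ X t‖ := by
  rw [charFun'_neg, Complex.norm_conj]

lemma jointCharFun'_add_sub (X Y : Ω → EuclideanSpace ℝ (Fin d))
    (s u : EuclideanSpace ℝ (Fin d)) :
    jointCharFun' μ (fun ω => X ω + Y ω) (fun ω => X ω - Y ω) s u
      = jointCharFun' μ X Y (s + u) (s - u) := by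
  unfold jointCharFun'
  congr 1 with ω
  congr 3
  simp only [inner_add_left, inner_sub_left, inner_add_right, inner_sub_right]
  ring

lemma jointCharFun'_zero_right (X Y : Ω → EuclideanSpace ℝ (Fin d))
    (t : EuclideanSpace ℝ (Fin d)) :
    jointCharFun' μ X Y t 0 = charFun' μ X t := by
  simp [jointCharFun', charFun']

lemma jointCharFun'_zero_left (X Y : Ω → EuclideanSpace ℝ (Fin d))
    (t : EuclideanSpace ℝ (Fin d)) :
    jointCharFun' μ X Y 0 t = charFun' μ Y t := by
  simp [jointCharFun', charFun']

end CharFun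

lemma abs_norm_sub_norm_le_of_norm_eq {E : Type*} [SeminormedAddCommGroup E]
    {a b p q : E} {δ₁ δ₂ : ℝ} (ha : ‖a - p‖ ≤ δ₁) (hb : ‖b - q‖ ≤ δ₂) (hpq : ‖p‖ = ‖q‖) :
    |‖a‖ - ‖b‖| ≤ δ₁ + δ₂ := by
  have ka := (abs_norm_sub_norm_le a p).trans ha
  have kb := (abs_norm_sub_norm_le b q).trans hb
  rw [abs_le] at ka kb ⊢
  constructor <;> linarith

theorem klebanov_moduli_close_general {Ω : Type*} [MeasurableSpace Ω]
    (μ : Measure Ω) {d : ℕ}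
    (X₁ X₂ : Ω → EuclideanSpace ℝ (Fin d))
    (ε T : ℝ)
    (hdep : ∀ t₁ t₂ : EuclideanSpace ℝ (Fin d),
      (∑ i, |t₁ i|) ≤ T → (∑ i, |t₂ i|) ≤ T →
      ‖(jointCharFun' μ (fun ω => X₁ ω + X₂ ω) (fun ω => X₁ ω - X₂ ω) t₁ t₂
          - charFun' μ (fun ω => X₁ ω + X₂ ω) t₁
            * charFun' μ (fun ω => X₁ ω - X₂ ω) t₂)‖ ≤ ε) :
    ∀ t : EuclideanSpace ℝ (Fin d), (∑ i, |t i|) ≤ T →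
      |‖charFun' μ X₁ (2 • t)‖ - ‖charFun' μ X₂ (2 • t)‖| ≤ 2 * ε := by
  intro t ht
  have hnt : (∑ i, |(-t) i|) ≤ T := by simpa only [PiLp.neg_apply, abs_neg] using ht
  have h₁ := hdep t t ht ht
  have h₂ := hdep t (-t) ht hnt
  rw [jointCharFun'_add_sub, ← two_smul ℕ, sub_self, jointCharFun'_zero_right] at h₁
  rw [jointCharFun'_add_sub, add_neg_cancel, sub_neg_eq_add, ← two_smul ℕ,
    jointCharFun'_zero_left] at h₂
  rw [two_mul]
  refine abs_norm_sub_norm_le_of_norm_eq h₁ h₂ ?_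
  rw [norm_mul, norm_mul, norm_charFun'_neg]

/-- Under the Klebanov hypotheses (`X₁ ⟂ X₂` and `X₁+X₂, X₁−X₂`
(ε,T)-dependent), the moduli of `f₁` and `f₂` are nearly equal:
`||f₁(2t)| − |f₂(2t)|| ≤ 2ε` for `‖t‖₁ ≤ T`. -/
theorem klebanov_moduli_close {Ω : Type*} [MeasurableSpace Ω]
    (μ : Measure Ω) [IsProbabilityMeasure μ] {d : ℕ}
    (X₁ X₂ : Ω → EuclideanSpace ℝ (Fin d))
    (hX₁ : Measurable X₁) (hX₂ : Measurable X₂)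
    (hind : IndepFun X₁ X₂ μ)
    (ε T : ℝ) (hε : 0 ≤ ε) (hT : 0 < T)
    (hdep : ∀ t₁ t₂ : EuclideanSpace ℝ (Fin d),
      (∑ i, |t₁ i|) ≤ T → (∑ i, |t₂ i|) ≤ T →
      ‖(jointCharFun' μ (fun ω => X₁ ω + X₂ ω) (fun ω => X₁ ω - X₂ ω) t₁ t₂
          - charFun' μ (fun ω => X₁ ω + X₂ ω) t₁
            * charFun' μ (fun ω => X₁ ω - X₂ ω) t₂)‖ ≤ ε) :
    ∀ t : EuclideanSpace ℝ (Fin d), (∑ i, |t i|) ≤ T →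
      |‖charFun' μ X₁ (2 • t)‖ - ‖charFun' μ X₂ (2 • t)‖| ≤ 2 * ε :=
  klebanov_moduli_close_general μ X₁ X₂ ε T hdep
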